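/- arXiv:1308.2314 — 3 statements merged into one kernel-verified Lean document; each statement's English description precedes it below -/
import Mathlib

section
/- For any energy value f̃ > −μ₀M₀, on the level set {K = f̃} of the regularized Kepler Hamiltonian K(z,w) = |w|²/(8μ₀) + f|z|² − μ₀M₀ intersected with the KS cone with z ≠ 0, the image under K.S. lies in the level set {‖P‖²/(2μ₀) − (μ₀M₀+f̃)/‖Q‖ = −f} of a modified Kepler Hamiltonian; hence projections of regularized orbits to physical space are Keplerian ellipses of the Kepler problem with mass parameter M₀ + f̃/μ₀. -/
/-- The quaternion unit `i`. -/
def qi : Quaternion ℝ := ⟨0,1,0,0⟩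

/-!
The quaternion norm is multiplicative and `‖qi‖ = 1`, so `‖Q‖ = ‖z‖²` and `‖P‖ = ‖w‖ / (2‖z‖)`.
In these terms the modified Kepler energy plus `f` equals `(K(z,w) - f̃) / ‖z‖²`, so one vanishes
exactly when the other does.
-/

open scoped Quaternion

lemma norm_qi : ‖qi‖ = 1 := by
  have h : ‖qi‖ * ‖qi‖ = 1 := by
    rw [← Quaternion.normSq_eq_norm_mul_self, Quaternion.normSq_def']
    simp [qi]
  nlinarith [norm_nonneg qi]

lemma norm_star_mul_qi_mul (z w : ℍ[ℝ]) : ‖star z * qi * w‖ = ‖z‖ * ‖w‖ := by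
  rw [norm_mul, norm_mul, norm_star, norm_qi, mul_one]

lemma norm_ks_momentum (z w : ℍ[ℝ]) :
    ‖((2 * ‖z‖ ^ 2)⁻¹ : ℝ) • (star z * qi * w)‖ = ‖w‖ / (2 * ‖z‖) := by
  rw [norm_smul, norm_star_mul_qi_mul, Real.norm_of_nonneg (by positivity)]
  rcases eq_or_ne ‖z‖ 0 with hz | hz
  · simp [hz]
  · field_simp

lemma energy_eq_iff_kepler_energy_eq {r s μ c f e : ℝ} (hr : r ≠ 0) :
    s ^ 2 / (8 * μ) + f * r ^ 2 - c = e ↔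
      (s / (2 * r)) ^ 2 / (2 * μ) - (c + e) / r ^ 2 = -f := by
  have shifted_kepler : (s / (2 * r)) ^ 2 / (2 * μ) - (c + e) / r ^ 2 + f
      = (s ^ 2 / (8 * μ) + f * r ^ 2 - c - e) / r ^ 2 := by
    field_simp
    ring
  rw [← sub_eq_zero (b := e), ← add_eq_zero_iff_eq_neg, shifted_kepler, div_eq_zero_iff]
  simp [hr]

theorem KS_energy_levels_general (μ₀ M₀ f ftilde : ℝ)
    (z w : Quaternion ℝ) (hz : z ≠ 0) :
    (‖w‖ ^ 2 / (8 * μ₀) + f * ‖z‖ ^ 2 - μ₀ * M₀ = ftilde) ↔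
    (‖((2 * ‖z‖ ^ 2)⁻¹ : ℝ) • (star z * qi * w)‖ ^ 2 / (2 * μ₀)
        - (μ₀ * M₀ + ftilde) / ‖star z * qi * z‖ = -f) := by
  rw [norm_ks_momentum, norm_star_mul_qi_mul, ← sq]
  exact energy_eq_iff_kepler_energy_eq (norm_ne_zero_iff.mpr hz)

theorem KS_energy_levels (μ₀ M₀ f ftilde : ℝ) (hμ : 0 < μ₀) (hM : 0 < M₀)
    (hf : 0 < f) (hft : -(μ₀ * M₀) < ftilde)
    (z w : Quaternion ℝ) (hz : z ≠ 0) (hBL : (star z * qi * w).re = 0) :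
    (‖w‖ ^ 2 / (8 * μ₀) + f * ‖z‖ ^ 2 - μ₀ * M₀ = ftilde) ↔
    (‖((2 * ‖z‖ ^ 2)⁻¹ : ℝ) • (star z * qi * w)‖ ^ 2 / (2 * μ₀)
        - (μ₀ * M₀ + ftilde) / ‖star z * qi * z‖ = -f) :=
  KS_energy_levels_general μ₀ M₀ f ftilde z w hz
end

section
/- Restricted to a Levi-Civita plane E ⊂ ℍ with orthonormal basis r₁, r₂ (so Re{r̄₁ i r₂} = 0), the Hopf map acts as complex squaring: under the identifications r₁ ↦ 1, r₂ ↦ i of E with ℂ and r̄₁ i r₁ ↦ 1, r̄₁ i r₂ ↦ i of its image plane with ℂ, the quaternion c₁r₁ + c₂r₂ maps to (c₁² − c₂²) + 2c₁c₂ i = (c₁ + c₂ i)². -/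
/-!
For a pure quaternion `a`, the form `(p, q) ↦ p̄ a q` satisfies `q̄ a p = -(p̄ a q)‾`, so the
Levi-Civita condition `Re (r̄₁ a r₂) = 0` makes it symmetric on `r₁, r₂`. Writing
`u = r̄₁ r₂`, a pure unit quaternion with `u² = -1`, we get `r̄₁ a r₂ = (r̄₁ a r₁) u` and
`r̄₂ a r₂ = (r̄₂ a r₁) u = (r̄₁ a r₁) u² = -(r̄₁ a r₁)`. Expanding the Hopf map bilinearly on
`c₁ r₁ + c₂ r₂` then gives the complex squaring formula.
-/

namespace Quaternion

variable {R : Type*} [CommRing R]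

theorem star_eq_neg_of_re_eq_zero {a : ℍ[R]} (ha : a.re = 0) : star a = -a := by
  simp [star_eq_two_re_sub, ha]

theorem mul_self_eq_neg_normSq_of_re_eq_zero {u : ℍ[R]} (hu : u.re = 0) :
    u * u = -((normSq u : R) : ℍ[R]) := by
  rw [← Quaternion.star_mul_self, star_eq_neg_of_re_eq_zero hu, neg_mul, neg_neg]

theorem star_mul_mul_comm_of_re_eq_zero {a p q : ℍ[R]} (ha : a.re = 0)
    (h : (star p * a * q).re = 0) : star q * a * p = star p * a * q := by
  have hstar := star_eq_neg_of_re_eq_zero h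
  rw [star_mul, star_mul, star_star, star_eq_neg_of_re_eq_zero ha] at hstar
  simpa [mul_assoc] using hstar

theorem star_mul_mul_eq_neg_of_levi_civita {a r₁ r₂ : ℍ[R]} (ha : a.re = 0)
    (h₁ : normSq r₁ = 1) (h₂ : normSq r₂ = 1) (horth : (star r₁ * r₂).re = 0)
    (hLC : (star r₁ * a * r₂).re = 0) :
    star r₂ * a * r₂ = -(star r₁ * a * r₁) := by
  set u := star r₁ * r₂
  have hr₁ : r₁ * star r₁ = 1 := by rw [self_mul_star, h₁, coe_one]
  have hu : u * u = -1 := by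
    rw [mul_self_eq_neg_normSq_of_re_eq_zero horth, map_mul (normSq (R := R)), normSq_star, h₁, h₂, one_mul,
      coe_one]
  have insert_r₁ (x : ℍ[R]) : x * r₂ = x * r₁ * u := by
    rw [mul_assoc x r₁, ← mul_assoc r₁, hr₁, one_mul]
  calc star r₂ * a * r₂ = star r₂ * a * r₁ * u := insert_r₁ _
    _ = star r₁ * a * r₂ * u := by rw [star_mul_mul_comm_of_re_eq_zero ha hLC]
    _ = star r₁ * a * r₁ * (u * u) := by rw [insert_r₁, mul_assoc]
    _ = -(star r₁ * a * r₁) := by rw [hu, mul_neg_one]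

theorem star_add_mul_mul_add (a r₁ r₂ : ℍ[R]) (c₁ c₂ : R) :
    star (c₁ • r₁ + c₂ • r₂) * a * (c₁ • r₁ + c₂ • r₂)
      = c₁ ^ 2 • (star r₁ * a * r₁) + (c₁ * c₂) • (star r₁ * a * r₂ + star r₂ * a * r₁)
        + c₂ ^ 2 • (star r₂ * a * r₂) := by
  simp only [star_add, star_smul, add_mul, mul_add, smul_mul_assoc, mul_smul_comm]
  module

end Quaternion

theorem qi_re : qi.re = 0 := rfl

theorem hopf_is_squaring_on_LC_plane (r₁ r₂ : Quaternion ℝ)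
    (h₁ : ‖r₁‖ = 1) (h₂ : ‖r₂‖ = 1)
    (hBL : (star r₁ * qi * r₂).re = 0) (horth : (star r₁ * r₂).re = 0)
    (c₁ c₂ : ℝ) :
    star (c₁ • r₁ + c₂ • r₂) * qi * (c₁ • r₁ + c₂ • r₂)
      = (c₁ ^ 2 - c₂ ^ 2) • (star r₁ * qi * r₁)
        + (2 * c₁ * c₂) • (star r₁ * qi * r₂) := by
  have hn₁ : Quaternion.normSq r₁ = 1 := by rw [Quaternion.normSq_eq_norm_mul_self, h₁, one_mul]
  have hn₂ : Quaternion.normSq r₂ = 1 := by rw [Quaternion.normSq_eq_norm_mul_self, h₂, one_mul]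
  rw [Quaternion.star_add_mul_mul_add,
    Quaternion.star_mul_mul_comm_of_re_eq_zero qi_re hBL,
    Quaternion.star_mul_mul_eq_neg_of_levi_civita qi_re hn₁ hn₂ horth hBL]
  module
end

section
/- The Kustaanheimo-Stiefel map restricted to the cotangent bundle of a Levi-Civita plane reduces to the Levi-Civita map: with z = c₁r₁ + c₂r₂ and w = c₃r₁ + c₄r₂ in a Levi-Civita plane with orthonormal basis r₁, r₂, K.S.(z,w) = ((c₁²−c₂²) r̄₁ir₁ + 2c₁c₂ r̄₁ir₂, ((c₁c₃−c₂c₄) r̄₁ir₁ + (c₁c₄+c₂c₃) r̄₁ir₂)/(2(c₁²+c₂²))), which under the complex identifications r₁ ∼ r̄₁ir₁ ∼ 1, r₂ ∼ r̄₁ir₂ ∼ i equals the Levi-Civita transformation (z,w) ↦ (z², w/(2z̄)) on ℂ×ℂ. -/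
/-- The Kustaanheimo-Stiefel map (z,w) ↦ (Q,P) = (z̄ i z, z̄ i w / (2|z|²)). -/
noncomputable def KS (p : Quaternion ℝ × Quaternion ℝ) : Quaternion ℝ × Quaternion ℝ :=
  (star p.1 * qi * p.1, ((2 * ‖p.1‖ ^ 2)⁻¹ : ℝ) • (star p.1 * qi * p.2))

open Quaternion

namespace Quaternion

variable {R : Type*} [CommRing R]

theorem re_mul_comm (a b : ℍ[R]) : (a * b).re = (b * a).re := by
  simp only [re_mul]
  ring

theorem mul_eq_neg_mul_of_re_eq_zero [NoZeroDivisors R] [CharZero R] {a b : ℍ[R]}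
    (ha : a.re = 0) (hb : b.re = 0) (hab : (a * b).re = 0) : a * b = -(b * a) := by
  have h := star_eq_neg.mpr hab
  rw [star_mul, star_eq_neg.mpr ha, star_eq_neg.mpr hb, neg_mul_neg] at h
  rw [h, neg_neg]

theorem inner_eq_re_star_mul (a b : ℍ) : inner ℝ a b = (star a * b).re := by
  rw [inner_def, re_mul_comm, ← re_star, star_mul, star_star]

theorem normSq_eq_one_of_norm_eq_one {a : ℍ} (h : ‖a‖ = 1) : normSq a = 1 := by
  rw [normSq_eq_norm_mul_self, h, one_mul]

end Quaternion

theorem star_qi : star qi = -qi :=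
  star_eq_neg.mpr rfl

theorem star_mul_qi_mul_swap (x y : ℍ) : star y * qi * x = -star (star x * qi * y) := by
  rw [star_mul, star_mul, star_star, star_qi, neg_mul, mul_neg, neg_neg, mul_assoc]

theorem re_star_mul_qi_mul_self (x : ℍ) : (star x * qi * x).re = 0 :=
  star_eq_neg.mp (by rw [← neg_eq_iff_eq_neg.mpr (star_mul_qi_mul_swap x x)])

structure IsLeviCivitaBasis (r₁ r₂ : ℍ) : Prop where
  norm_left : ‖r₁‖ = 1
  norm_right : ‖r₂‖ = 1
  re_star_mul_qi_mul : (star r₁ * qi * r₂).re = 0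
  re_star_mul : (star r₁ * r₂).re = 0

namespace IsLeviCivitaBasis

variable {r₁ r₂ : ℍ} (h : IsLeviCivitaBasis r₁ r₂)
include h

theorem star_right_mul_qi_mul_left : star r₂ * qi * r₁ = star r₁ * qi * r₂ := by
  rw [star_mul_qi_mul_swap, star_eq_neg.mpr h.re_star_mul_qi_mul, neg_neg]

theorem star_right_mul_qi_mul_right : star r₂ * qi * r₂ = -(star r₁ * qi * r₁) := by
  set u := star r₁ * r₂
  set a := star r₁ * qi * r₁
  have hr₂ : r₂ = r₁ * u := by
    rw [← mul_assoc, self_mul_star, normSq_eq_one_of_norm_eq_one h.norm_left, coe_one, one_mul]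
  have hu_star : star u = -u := star_eq_neg.mpr h.re_star_mul
  have hu_sq : u * u = -1 := by
    have hu : normSq u = 1 := by
      rw [map_mul, normSq_star, normSq_eq_one_of_norm_eq_one h.norm_left,
        normSq_eq_one_of_norm_eq_one h.norm_right, one_mul]
    rw [← sq, sq_eq_neg_normSq.mpr h.re_star_mul, hu, coe_one]
  have hau : a * u = -(u * a) := by
    refine mul_eq_neg_mul_of_re_eq_zero (re_star_mul_qi_mul_self r₁) h.re_star_mul ?_
    rw [mul_assoc, ← hr₂]
    exact h.re_star_mul_qi_mul
  calc star r₂ * qi * r₂ = star (r₁ * u) * qi * (r₁ * u) := by rw [← hr₂]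
    _ = star u * (a * u) := by simp only [star_mul, a, mul_assoc]
    _ = -a := by rw [hau, hu_star, neg_mul_neg, ← mul_assoc, hu_sq, neg_one_mul]

theorem norm_smul_add_smul_sq (c₁ c₂ : ℝ) : ‖c₁ • r₁ + c₂ • r₂‖ ^ 2 = c₁ ^ 2 + c₂ ^ 2 := by
  have horth : inner ℝ (c₁ • r₁) (c₂ • r₂) = 0 := by
    rw [real_inner_smul_left, real_inner_smul_right, inner_eq_re_star_mul, h.re_star_mul,
      mul_zero, mul_zero]
  rw [sq, norm_add_sq_eq_norm_sq_add_norm_sq_real horth, norm_smul, norm_smul, h.norm_left,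
    h.norm_right, Real.norm_eq_abs, Real.norm_eq_abs]
  simp only [mul_one, abs_mul_abs_self, sq]

theorem star_smul_add_smul_mul_qi_mul (c₁ c₂ d₁ d₂ : ℝ) :
    star (c₁ • r₁ + c₂ • r₂) * qi * (d₁ • r₁ + d₂ • r₂)
      = (c₁ * d₁ - c₂ * d₂) • (star r₁ * qi * r₁)
        + (c₁ * d₂ + c₂ * d₁) • (star r₁ * qi * r₂) := by
  simp only [star_add, Quaternion.star_smul, add_mul, mul_add, smul_mul_assoc, mul_smul_comm]
  rw [h.star_right_mul_qi_mul_left, h.star_right_mul_qi_mul_right]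
  module

end IsLeviCivitaBasis

theorem KS_restricts_to_LC_general (r₁ r₂ : Quaternion ℝ)
    (h₁ : ‖r₁‖ = 1) (h₂ : ‖r₂‖ = 1)
    (hBL : (star r₁ * qi * r₂).re = 0) (horth : (star r₁ * r₂).re = 0)
    (c₁ c₂ c₃ c₄ : ℝ) :
    KS (c₁ • r₁ + c₂ • r₂, c₃ • r₁ + c₄ • r₂)
      = ((c₁ ^ 2 - c₂ ^ 2) • (star r₁ * qi * r₁)
            + (2 * c₁ * c₂) • (star r₁ * qi * r₂),
         ((2 * (c₁ ^ 2 + c₂ ^ 2))⁻¹ : ℝ) •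
            ((c₁ * c₃ - c₂ * c₄) • (star r₁ * qi * r₁)
              + (c₁ * c₄ + c₂ * c₃) • (star r₁ * qi * r₂))) := by
  have hB : IsLeviCivitaBasis r₁ r₂ := ⟨h₁, h₂, hBL, horth⟩
  simp only [KS, hB.norm_smul_add_smul_sq, hB.star_smul_add_smul_mul_qi_mul]
  congr 3 <;> ring

theorem KS_restricts_to_LC (r₁ r₂ : Quaternion ℝ)
    (h₁ : ‖r₁‖ = 1) (h₂ : ‖r₂‖ = 1)
    (hBL : (star r₁ * qi * r₂).re = 0) (horth : (star r₁ * r₂).re = 0)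
    (c₁ c₂ c₃ c₄ : ℝ) (hz : (c₁, c₂) ≠ 0) :
    KS (c₁ • r₁ + c₂ • r₂, c₃ • r₁ + c₄ • r₂)
      = ((c₁ ^ 2 - c₂ ^ 2) • (star r₁ * qi * r₁)
            + (2 * c₁ * c₂) • (star r₁ * qi * r₂),
         ((2 * (c₁ ^ 2 + c₂ ^ 2))⁻¹ : ℝ) •
            ((c₁ * c₃ - c₂ * c₄) • (star r₁ * qi * r₁)
              + (c₁ * c₄ + c₂ * c₃) • (star r₁ * qi * r₂))) :=
  KS_restricts_to_LC_general r₁ r₂ h₁ h₂ hBL horth c₁ c₂ c₃ c₄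
end
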